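/- arXiv:2504.01227 — 7 statements merged into one kernel-verified Lean document; each statement's English description precedes it below -/
import Mathlib

section
/- Let ρ be a probabilistic choice function and suppose π_M is a probability distribution over choice types that represents ρ and satisfies π_M(⊴ s) = min_{i∈{1,…,n}} P_i(s_i) for every choice type s (the representation induced by the Fréchet–Hoeffding upper bound, i.e. the progressive random choice representation). Then for every probability distribution π over choice types that represents ρ and every choice type s, both π_M(⊵ s) ≥ π(⊵ s) and π_M(⊴ s) ≥ π(⊴ s). -/
open Finset

variable {n : ℕ} {S : Fin n → Type*} [∀ i, Fintype (S i)] [∀ i, LinearOrder (S i)]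

/-- `ρ` is a probabilistic choice function: each `ρ i` is a probability distribution on `S i`. -/
def IsPCF (ρ : ∀ i, S i → ℝ) : Prop :=
  (∀ i (x : S i), 0 ≤ ρ i x) ∧ ∀ i, ∑ x : S i, ρ i x = 1

/-- The cumulative choice function `P_i(x) = ∑_{y ≤ x} ρ_i(y)`. -/
noncomputable def cumul (ρ : ∀ i, S i → ℝ) (i : Fin n) (x : S i) : ℝ :=
  ∑ y ∈ Finset.univ.filter (fun y => y ≤ x), ρ i y

/-- `π` is a probability distribution over choice types. -/
def IsDist (π : (∀ i, S i) → ℝ) : Prop :=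
  (∀ s, 0 ≤ π s) ∧ ∑ s : ∀ i, S i, π s = 1

/-- `π` represents `ρ`: the marginals of `π` agree with `ρ`. -/
def Represents (π : (∀ i, S i) → ℝ) (ρ : ∀ i, S i → ℝ) : Prop :=
  ∀ i (x : S i), ∑ s ∈ Finset.univ.filter (fun s : ∀ i, S i => s i = x), π s = ρ i x

/-- `π(⊴ s)`: total mass on choice types componentwise below `s`. -/
noncomputable def cdfLe (π : (∀ i, S i) → ℝ) (s : ∀ i, S i) : ℝ :=
  ∑ t ∈ Finset.univ.filter (fun t : ∀ i, S i => ∀ i, t i ≤ s i), π t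

/-- `π(⊵ s)`: total mass on choice types componentwise above `s`. -/
noncomputable def cdfGe (π : (∀ i, S i) → ℝ) (s : ∀ i, S i) : ℝ :=
  ∑ t ∈ Finset.univ.filter (fun t : ∀ i, S i => ∀ i, s i ≤ t i), π t

/- ### Auxiliary lemmas -/

lemma cumul_mono (ρ : ∀ i, S i → ℝ) (hρ : IsPCF ρ) (i : Fin n) : Monotone (cumul ρ i) := by
  intro a b hab
  apply Finset.sum_le_sum_of_subset_of_nonneg
  · exact Finset.monotone_filter_right _ (fun y _ hy => le_trans hy hab)
  · intro y _ _; exact hρ.1 i y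

/-- marginal sums: mass of `{t : p (t i)}` equals `∑_{y : p y} ρ i y`. -/
lemma rep_fiber (π : (∀ i, S i) → ℝ) (ρ : ∀ i, S i → ℝ) (hrep : Represents π ρ)
    (i : Fin n) (p : S i → Prop) [DecidablePred p] :
    ∑ t ∈ Finset.univ.filter (fun t : ∀ i, S i => p (t i)), π t
      = ∑ y ∈ Finset.univ.filter p, ρ i y := by
  have h := Finset.sum_fiberwise_eq_sum_filter Finset.univ (Finset.univ.filter p)
      (fun t : ∀ i, S i => t i) π
  simp only [Finset.mem_filter, Finset.mem_univ, true_and] at h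
  rw [← h]
  exact Finset.sum_congr rfl fun y _ => hrep i y

lemma cdfLe_le_cumul (π : (∀ i, S i) → ℝ) (ρ : ∀ i, S i → ℝ) (hπ : IsDist π)
    (hrep : Represents π ρ) (s : ∀ i, S i) (i : Fin n) :
    cdfLe π s ≤ cumul ρ i (s i) := by
  have h : cdfLe π s ≤ ∑ t ∈ Finset.univ.filter (fun t : ∀ i, S i => t i ≤ s i), π t := by
    apply Finset.sum_le_sum_of_subset_of_nonneg
    · exact Finset.monotone_filter_right _ (fun t _ ht => ht i)
    · intro t _ _; exact hπ.1 t
  rwa [rep_fiber π ρ hrep i (fun y => y ≤ s i)] at h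

/-- Key step towards comonotonicity: if `t` is in the support of the min-copula distribution
`πM`, `cdfLe πM t ≤ cdfLe πM t'`, and `t' j < t j` for some `j`, we get a contradiction. -/
lemma chain_aux (hn : 0 < n) (ρ : ∀ i, S i → ℝ) (hρ : IsPCF ρ)
    (πM : (∀ i, S i) → ℝ) (hMdist : IsDist πM)
    (hMcdf : ∀ s : ∀ i, S i, cdfLe πM s = ⨅ i, cumul ρ i (s i))
    (t t' : ∀ i, S i) (ht : πM t ≠ 0) (hj : ∃ j, t' j < t j)
    (hle : cdfLe πM t ≤ cdfLe πM t') : False := by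
  haveI : Nonempty (Fin n) := ⟨⟨0, hn⟩⟩
  set m : ∀ i, S i := fun i => min (t i) (t' i) with hm
  have hbdd : ∀ u : ∀ i, S i, BddBelow (Set.range fun i => cumul ρ i (u i)) :=
    fun u => (Set.finite_range _).bddBelow
  -- `cdfLe πM t ≤ cdfLe πM m`
  have h1 : cdfLe πM t ≤ cdfLe πM m := by
    conv_lhs => rw [hMcdf t]
    rw [hMcdf m]
    apply le_ciInf
    intro i
    have : cumul ρ i (m i) = min (cumul ρ i (t i)) (cumul ρ i (t' i)) :=
      (cumul_mono ρ hρ i).map_min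
    rw [this, le_min_iff]
    have hc1 : (⨅ i, cumul ρ i (t i)) ≤ cumul ρ i (t i) := ciInf_le (hbdd t) i
    have hle' : (⨅ i, cumul ρ i (t i)) ≤ ⨅ i, cumul ρ i (t' i) := by
      rw [← hMcdf t, ← hMcdf t']; exact hle
    have hc2 : (⨅ i, cumul ρ i (t i)) ≤ cumul ρ i (t' i) :=
      le_trans hle' (ciInf_le (hbdd t') i)
    exact ⟨hc1, hc2⟩
  -- but `cdfLe πM m + πM t ≤ cdfLe πM t`
  have h2 : cdfLe πM m + πM t ≤ cdfLe πM t := by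
    obtain ⟨j, hjlt⟩ := hj
    have htnotm : t ∉ Finset.univ.filter (fun u : ∀ i, S i => ∀ i, u i ≤ m i) := by
      simp only [Finset.mem_filter, Finset.mem_univ, true_and, not_forall]
      exact ⟨j, not_le.2 (lt_of_le_of_lt (min_le_right _ _) hjlt)⟩
    have hsub : insert t (Finset.univ.filter (fun u : ∀ i, S i => ∀ i, u i ≤ m i))
        ⊆ Finset.univ.filter (fun u : ∀ i, S i => ∀ i, u i ≤ t i) := by
      intro u hu
      rcases Finset.mem_insert.1 hu with rfl | hu
      · simp
      · simp only [Finset.mem_filter, Finset.mem_univ, true_and] at hu ⊢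
        exact fun i => le_trans (hu i) (min_le_left _ _)
    calc cdfLe πM m + πM t
        = ∑ u ∈ insert t (Finset.univ.filter (fun u : ∀ i, S i => ∀ i, u i ≤ m i)), πM u := by
          rw [Finset.sum_insert htnotm, add_comm]; rfl
      _ ≤ cdfLe πM t := Finset.sum_le_sum_of_subset_of_nonneg hsub (fun u _ _ => hMdist.1 u)
  have hpos : 0 < πM t := lt_of_le_of_ne (hMdist.1 t) (Ne.symm ht)
  linarith

/-- The support of the min-copula distribution is a chain. -/
lemma supp_chain (hn : 0 < n) (ρ : ∀ i, S i → ℝ) (hρ : IsPCF ρ)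
    (πM : (∀ i, S i) → ℝ) (hMdist : IsDist πM)
    (hMcdf : ∀ s : ∀ i, S i, cdfLe πM s = ⨅ i, cumul ρ i (s i))
    (t t' : ∀ i, S i) (ht : πM t ≠ 0) (ht' : πM t' ≠ 0) :
    (∀ i, t i ≤ t' i) ∨ (∀ i, t' i ≤ t i) := by
  by_contra h
  push_neg at h
  obtain ⟨⟨j, hj⟩, ⟨k, hk⟩⟩ := h
  rcases le_total (cdfLe πM t) (cdfLe πM t') with hle | hle
  · exact chain_aux hn ρ hρ πM hMdist hMcdf t t' ht ⟨j, hj⟩ hle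
  · exact chain_aux hn ρ hρ πM hMdist hMcdf t' t ht' ⟨k, hk⟩ hle

/-- the min-copula (PRC) representation `π_M` of `ρ` maximizes, among all
representations `π` of `ρ`, both the mass above any type `s` and the mass below `s`. -/
theorem prc_maximizes_dominance (hn : 0 < n) [∀ i, Nonempty (S i)]
    (ρ : ∀ i, S i → ℝ) (hρ : IsPCF ρ)
    (πM : (∀ i, S i) → ℝ) (hMdist : IsDist πM) (hMrep : Represents πM ρ)
    (hMcdf : ∀ s : ∀ i, S i, cdfLe πM s = ⨅ i, cumul ρ i (s i)) :
    ∀ π : (∀ i, S i) → ℝ, IsDist π → Represents π ρ → ∀ s : ∀ i, S i,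
      cdfGe π s ≤ cdfGe πM s ∧ cdfLe π s ≤ cdfLe πM s := by
  haveI : Nonempty (Fin n) := ⟨⟨0, hn⟩⟩
  intro π hπ hrep s
  constructor
  · -- cdfGe part
    -- the nested family of down-sets of the support
    set A : Fin n → Finset (∀ i, S i) :=
      fun i => Finset.univ.filter (fun t : ∀ i, S i => πM t ≠ 0 ∧ t i < s i) with hA
    have hnested : ∀ i j, A i ⊆ A j ∨ A j ⊆ A i := by
      intro i j
      by_contra h
      push_neg at h
      obtain ⟨x, hxi, hxj⟩ := Finset.not_subset.1 h.1
      obtain ⟨y, hyj, hyi⟩ := Finset.not_subset.1 h.2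
      simp only [hA, Finset.mem_filter, Finset.mem_univ, true_and, not_and, not_lt] at hxi hxj hyj hyi
      rcases supp_chain hn ρ hρ πM hMdist hMcdf x y hxi.1 hyj.1 with hc | hc
      · exact absurd (lt_of_le_of_lt (hc j) hyj.2) (not_lt.2 (hxj hxi.1))
      · exact absurd (lt_of_le_of_lt (hc i) hxi.2) (not_lt.2 (hyi hyj.1))
    obtain ⟨i₀, -, hi₀⟩ := Finset.exists_max_image Finset.univ (fun i => (A i).card)
      Finset.univ_nonempty
    have hmax : ∀ i, A i ⊆ A i₀ := by
      intro i
      rcases hnested i i₀ with h | h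
      · exact h
      · exact (Finset.eq_of_subset_of_card_le h (hi₀ i (Finset.mem_univ i))).ge
    -- complement expressions
    have hcompl : ∀ (μ : (∀ i, S i) → ℝ), IsDist μ → cdfGe μ s
        = 1 - ∑ t ∈ Finset.univ.filter (fun t : ∀ i, S i => ¬ ∀ i, s i ≤ t i), μ t := by
      intro μ hμ
      have := Finset.sum_filter_add_sum_filter_not Finset.univ
        (fun t : ∀ i, S i => ∀ i, s i ≤ t i) μ
      rw [hμ.2] at this
      unfold cdfGe
      linarith
    rw [hcompl π hπ, hcompl πM hMdist]
    have key : ∑ t ∈ Finset.univ.filter (fun t : ∀ i, S i => ¬ ∀ i, s i ≤ t i), πM t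
        ≤ ∑ t ∈ Finset.univ.filter (fun t : ∀ i, S i => t i₀ < s i₀), πM t := by
      rw [← Finset.sum_filter_ne_zero (Finset.univ.filter (fun t : ∀ i, S i => ¬ ∀ i, s i ≤ t i))]
      apply Finset.sum_le_sum_of_subset_of_nonneg
      · intro t htmem
        simp only [Finset.mem_filter, Finset.mem_univ, true_and, not_forall, not_le] at htmem ⊢
        obtain ⟨⟨i, hi⟩, htne⟩ := htmem
        have : t ∈ A i := by simp [hA, htne, hi]
        have := hmax i this
        simp only [hA, Finset.mem_filter, Finset.mem_univ, true_and] at this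
        exact this.2
      · intro t _ _; exact hMdist.1 t
    have keyπ : ∑ t ∈ Finset.univ.filter (fun t : ∀ i, S i => t i₀ < s i₀), π t
        ≤ ∑ t ∈ Finset.univ.filter (fun t : ∀ i, S i => ¬ ∀ i, s i ≤ t i), π t := by
      apply Finset.sum_le_sum_of_subset_of_nonneg
      · intro t htmem
        simp only [Finset.mem_filter, Finset.mem_univ, true_and, not_forall, not_le] at htmem ⊢
        exact ⟨i₀, htmem⟩
      · intro t _ _; exact hπ.1 t
    have hmarg : ∑ t ∈ Finset.univ.filter (fun t : ∀ i, S i => t i₀ < s i₀), π t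
        = ∑ t ∈ Finset.univ.filter (fun t : ∀ i, S i => t i₀ < s i₀), πM t := by
      rw [rep_fiber π ρ hrep i₀ (fun y => y < s i₀), rep_fiber πM ρ hMrep i₀ (fun y => y < s i₀)]
    linarith
  · -- cdfLe part
    rw [hMcdf s]
    exact le_ciInf fun i => cdfLe_le_cumul π ρ hπ hrep s i
end

section
/- Let ρ be a probabilistic choice function and let π be a probability distribution over choice types that represents ρ and satisfies π(⊴ s) = min_{i∈{1,…,n}} P_i(s_i) for every choice type s. Then the support of π is a chain under the componentwise order: for all s, s' ∈ supp(π), either s ⊴ s' or s' ⊴ s (i.e., the min-copula assigns positive weight only to a progressive (comonotone) set of choice types). -/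
open Finset

variable {n : ℕ} {S : Fin n → Type*} [∀ i, Fintype (S i)] [∀ i, LinearOrder (S i)]

/- If `s, s'` in the support were incomparable, their meet `m = s ⊓ s'` lies strictly
below both, so `π(⊴ m) < min (π(⊴ s), π(⊴ s'))` because the mass at `s` and at `s'` is missing.
But `min_i P_i(min (s_i, s'_i))` is one of the numbers `P_i(s_i)`, `P_i(s'_i)` for each `i`, hence
the min-copula formula gives `π(⊴ m) ≥ min (π(⊴ s), π(⊴ s'))`. -/

lemma min_iInf_le_iInf_inf {ι β : Type*} [Finite ι] [Nonempty ι] [ConditionallyCompleteLinearOrder β]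
    {α : ι → Type*} [∀ i, LinearOrder (α i)] (F : ∀ i, α i → β) (s s' : ∀ i, α i) :
    min (⨅ i, F i (s i)) (⨅ i, F i (s' i)) ≤ ⨅ i, F i ((s ⊓ s') i) := by
  refine le_ciInf fun i => ?_
  rcases le_total (s i) (s' i) with h | h
  · rw [Pi.inf_apply, inf_eq_left.mpr h]
    exact (min_le_left _ _).trans (ciInf_le (Set.finite_range _).bddBelow i)
  · rw [Pi.inf_apply, inf_eq_right.mpr h]
    exact (min_le_right _ _).trans (ciInf_le (Set.finite_range _).bddBelow i)

lemma cdfLe_lt_cdfLe_of_lt {π : (∀ i, S i) → ℝ} (hπ : ∀ t, 0 ≤ π t) {m s : ∀ i, S i}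
    (hs : 0 < π s) (hms : m < s) : cdfLe π m < cdfLe π s :=
  Finset.sum_lt_sum_of_subset
    (fun t ht => by
      simp only [mem_filter, mem_univ, true_and] at ht ⊢
      exact fun i => (ht i).trans (hms.le i))
    (by simp [← Pi.le_def]) (by simpa [← Pi.le_def] using hms.not_ge) hs
    (fun t _ _ => hπ t)

theorem min_copula_support_chain_general
    (ρ : ∀ i, S i → ℝ)
    (π : (∀ i, S i) → ℝ) (hdist : IsDist π)
    (hcdf : ∀ s : ∀ i, S i, cdfLe π s = ⨅ i, cumul ρ i (s i)) :
    ∀ s s' : ∀ i, S i, 0 < π s → 0 < π s' →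
      (∀ i, s i ≤ s' i) ∨ (∀ i, s' i ≤ s i) := by
  intro s s' hs hs'
  rcases isEmpty_or_nonempty (Fin n) with _ | _
  · exact Or.inl isEmptyElim
  show s ≤ s' ∨ s' ≤ s
  by_contra! hincomp
  have hcopula : min (cdfLe π s) (cdfLe π s') ≤ cdfLe π (s ⊓ s') := by
    simpa only [hcdf] using min_iInf_le_iInf_inf (cumul ρ) s s'
  have hlt : cdfLe π (s ⊓ s') < cdfLe π s :=
    cdfLe_lt_cdfLe_of_lt hdist.1 hs (inf_lt_left.mpr hincomp.1)
  have hlt' : cdfLe π (s ⊓ s') < cdfLe π s' :=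
    cdfLe_lt_cdfLe_of_lt hdist.1 hs' (inf_lt_right.mpr hincomp.2)
  exact (lt_min hlt hlt').not_ge hcopula

/-- the min-copula representation has a chain (progressive/comonotone) support. -/
theorem min_copula_support_chain (hn : 0 < n) [∀ i, Nonempty (S i)]
    (ρ : ∀ i, S i → ℝ) (hρ : IsPCF ρ)
    (π : (∀ i, S i) → ℝ) (hdist : IsDist π) (hrep : Represents π ρ)
    (hcdf : ∀ s : ∀ i, S i, cdfLe π s = ⨅ i, cumul ρ i (s i)) :
    ∀ s s' : ∀ i, S i, 0 < π s → 0 < π s' →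
      (∀ i, s i ≤ s' i) ∨ (∀ i, s' i ≤ s i) :=
  min_copula_support_chain_general ρ π hdist hcdf
end

section
/- Let ρ be a probabilistic choice function and, for each i, let s̄_i denote the maximum element of S_i (the ▷-best alternative in S_i). Then there exists a probability distribution π over choice types that represents ρ and whose support consists only of near-optimal choice types if and only if ∑_{i=1}^n (1 − ρ_i(s̄_i)) ≤ 1. -/
open Finset

variable {n : ℕ} {S : Fin n → Type*} [∀ i, Fintype (S i)] [∀ i, LinearOrder (S i)]

/-!
Summing over `i` the marginal identities `∑_{s i ≠ s̄ i} π s = 1 - ρ i (s̄ i)` counts every type `s`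
with multiplicity its Hamming distance to `s̄`, which is at most one on a near-optimal support; so
the total mistake probability is at most `∑ s, π s = 1`. Conversely, when it is at most one, put
mass `ρ j y` on the type deviating from `s̄` only at `j`, to `y ≠ s̄ j`, and the remaining mass on `s̄`.
-/

open Function

theorem sum_sum_filter_ne_eq_sum_hammingDist_mul {ι : Type*} {β : ι → Type*} [Fintype ι]
    [DecidableEq ι] [∀ i, Fintype (β i)] [∀ i, DecidableEq (β i)]
    (π : (∀ i, β i) → ℝ) (a : ∀ i, β i) :
    ∑ i, ∑ s ∈ univ.filter (fun s : ∀ i, β i => s i ≠ a i), π s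
      = ∑ s, (hammingDist s a : ℝ) * π s := by
  simp_rw [sum_filter]
  rw [sum_comm]
  refine sum_congr rfl fun s _ => ?_
  rw [← sum_filter, sum_const, nsmul_eq_mul, hammingDist]

theorem hammingDist_update_le_one {ι : Type*} {β : ι → Type*} [Fintype ι] [DecidableEq ι]
    [∀ i, DecidableEq (β i)] (a : ∀ i, β i) (j : ι) (y : β j) :
    hammingDist (update a j y) a ≤ 1 := by
  refine (card_le_card fun i hi => ?_).trans (card_singleton j).le
  by_contra hij
  exact (mem_filter.1 hi).2 (update_of_ne (mem_singleton.not.1 hij) _ _)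

theorem sum_filter_ne_eq_one_sub {π : (∀ i, S i) → ℝ} {ρ : ∀ i, S i → ℝ}
    (hπ : ∑ s, π s = 1) (hrep : Represents π ρ) (i : Fin n) (x : S i) :
    ∑ s ∈ univ.filter (fun s : ∀ i, S i => s i ≠ x), π s = 1 - ρ i x := by
  rw [← hπ, ← hrep i x, ← sum_filter_add_sum_filter_not univ (fun s : ∀ i, S i => s i = x)]
  ring

theorem sum_one_sub_eq_sum_hammingDist_mul {π : (∀ i, S i) → ℝ} {ρ : ∀ i, S i → ℝ}
    (hπ : ∑ s, π s = 1) (hrep : Represents π ρ) (a : ∀ i, S i) :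
    ∑ i, (1 - ρ i (a i)) = ∑ s, (hammingDist s a : ℝ) * π s := by
  simp_rw [← sum_filter_ne_eq_one_sub hπ hrep]
  exact sum_sum_filter_ne_eq_sum_hammingDist_mul π a

theorem sum_one_sub_le_one_of_represents {π : (∀ i, S i) → ℝ} {ρ : ∀ i, S i → ℝ}
    (hπ : IsDist π) (hrep : Represents π ρ) (a : ∀ i, S i)
    (hsupp : ∀ s, 0 < π s → hammingDist s a ≤ 1) :
    ∑ i, (1 - ρ i (a i)) ≤ 1 := by
  rw [sum_one_sub_eq_sum_hammingDist_mul hπ.2 hrep, ← hπ.2]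
  refine sum_le_sum fun s _ => ?_
  rcases (hπ.1 s).eq_or_lt with hs | hs
  · simp [← hs]
  · exact mul_le_of_le_one_left hs.le (by exact_mod_cast hsupp s hs)

/-- The `y = a j` terms of the double sum all put mass on `a`; after the correction `a` carries
`1 - ∑ i, (1 - ρ i (a i))` and every other type the mass `ρ j y` of its single deviation. -/
noncomputable def oneMistakeDist (ρ : ∀ i, S i → ℝ) (a : ∀ i, S i) : (∀ i, S i) → ℝ :=
  fun s => ∑ j, ∑ y, (if update a j y = s then ρ j y else 0) - if a = s then (n - 1 : ℝ) else 0

section oneMistakeDist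

variable {ρ : ∀ i, S i → ℝ} (a : ∀ i, S i)

theorem oneMistakeDist_self :
    oneMistakeDist ρ a a = 1 - ∑ i, (1 - ρ i (a i)) := by
  simp only [oneMistakeDist, eq_comm, eq_update_self_iff, sum_ite_eq', mem_univ, ↓reduceIte,
    sum_sub_distrib, sum_const, card_univ, Fintype.card_fin, nsmul_eq_mul, mul_one]
  ring

theorem oneMistakeDist_of_ne {s : ∀ i, S i} (hs : a ≠ s) :
    oneMistakeDist ρ a s = ∑ j, ∑ y, if update a j y = s then ρ j y else 0 := by
  simp [oneMistakeDist, hs]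

theorem sum_oneMistakeDist (hρ : ∀ i, ∑ x, ρ i x = 1) : ∑ s, oneMistakeDist ρ a s = 1 := by
  simp [oneMistakeDist, sum_sub_distrib, sum_comm (γ := ∀ i, S i), hρ]

theorem represents_oneMistakeDist (hρ : ∀ i, ∑ x, ρ i x = 1) :
    Represents (oneMistakeDist ρ a) ρ := by
  intro i x
  have hcoord : ∀ j, ∑ y, (if update a j y i = x then ρ j y else 0)
      = if j = i then ρ i x else if a i = x then 1 else 0 := by
    intro j
    rcases eq_or_ne j i with rfl | hji
    · simp
    · simp [update_of_ne hji.symm, hρ, hji]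
  simp only [oneMistakeDist, sum_sub_distrib]
  rw [sum_comm]
  simp only [sum_comm (γ := ∀ i, S i), sum_ite_eq, mem_filter, mem_univ, true_and, hcoord]
  rw [sum_ite, filter_eq', filter_ne', if_pos (mem_univ i), sum_singleton,
    sum_const, card_erase_of_mem (mem_univ i), card_univ, Fintype.card_fin, nsmul_eq_mul,
    Nat.cast_pred i.pos]
  split_ifs <;> ring

theorem hammingDist_le_one_of_oneMistakeDist_pos {s : ∀ i, S i}
    (hs : 0 < oneMistakeDist ρ a s) : hammingDist s a ≤ 1 := by
  rcases eq_or_ne a s with rfl | hne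
  · simp
  rw [oneMistakeDist_of_ne a hne] at hs
  obtain ⟨j, -, hj⟩ := exists_ne_zero_of_sum_ne_zero hs.ne'
  obtain ⟨y, -, hy⟩ := exists_ne_zero_of_sum_ne_zero hj
  have hupd : update a j y = s := by
    by_contra h
    exact hy (if_neg h)
  exact hupd ▸ hammingDist_update_le_one a j y

theorem isDist_oneMistakeDist (hρ : IsPCF ρ) (h : ∑ i, (1 - ρ i (a i)) ≤ 1) :
    IsDist (oneMistakeDist ρ a) := by
  refine ⟨fun s => ?_, sum_oneMistakeDist a hρ.2⟩
  rcases eq_or_ne a s with rfl | hne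
  · rw [oneMistakeDist_self]; linarith
  · rw [oneMistakeDist_of_ne a hne]
    exact sum_nonneg fun j _ => sum_nonneg fun y _ => ite_nonneg (hρ.1 j y) le_rfl

end oneMistakeDist

theorem one_mistake_characterization_general
    (ρ : ∀ i, S i → ℝ) (hρ : IsPCF ρ)
    (sbar : ∀ i, S i) :
    (∃ π : (∀ i, S i) → ℝ, IsDist π ∧ Represents π ρ ∧
        ∀ s : ∀ i, S i, 0 < π s →
          (Finset.univ.filter (fun i => s i ≠ sbar i)).card ≤ 1) ↔
      ∑ i, (1 - ρ i (sbar i)) ≤ 1 := by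
  constructor
  · rintro ⟨π, hπ, hrep, hsupp⟩
    exact sum_one_sub_le_one_of_represents hπ hrep sbar hsupp
  · intro h
    exact ⟨oneMistakeDist ρ sbar, isDist_oneMistakeDist sbar hρ h,
      represents_oneMistakeDist sbar hρ.2,
      fun s hs => hammingDist_le_one_of_oneMistakeDist_pos sbar hs⟩

/-- `ρ` has a representation supported on near-optimal choice types
iff the total probability of mistakes is at most 1. -/
theorem one_mistake_characterization [∀ i, Nonempty (S i)]
    (ρ : ∀ i, S i → ℝ) (hρ : IsPCF ρ)
    (sbar : ∀ i, S i) (hsbar : ∀ i (x : S i), x ≤ sbar i) :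
    (∃ π : (∀ i, S i) → ℝ, IsDist π ∧ Represents π ρ ∧
        ∀ s : ∀ i, S i, 0 < π s →
          (Finset.univ.filter (fun i => s i ≠ sbar i)).card ≤ 1) ↔
      ∑ i, (1 - ρ i (sbar i)) ≤ 1 :=
  one_mistake_characterization_general ρ hρ sbar
end

section
/- Let ρ be a probabilistic choice function identified by the Fréchet–Hoeffding lower bound W, with identifying distribution π_W. Then any two choice types s, s' in the support of π_W differ in at most two components: |{i ∈ {1,…,n} : s_i ≠ s'_i}| ≤ 2. -/
open Finset

variable {n : ℕ} {S : Fin n → Type*} [∀ i, Fintype (S i)] [∀ i, LinearOrder (S i)]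

/-- Alternating sums of `(-1)^card` over a nonempty powerset vanish (real version). -/
lemma FH_aux_S0 {α : Type*} [DecidableEq α] (B : Finset α) (hB : B.Nonempty) :
    ∑ T ∈ B.powerset, (-1:ℝ)^T.card = 0 := by
  have h := Finset.sum_powerset_neg_one_pow_card_of_nonempty hB
  have h2 : ((∑ T ∈ B.powerset, (-1:ℤ)^T.card : ℤ) : ℝ) = ∑ T ∈ B.powerset, (-1:ℝ)^T.card := by
    push_cast; rfl
  rw [← h2, h]; norm_num

/-- Key lemma: two support points cannot have two coordinates where `s' i < s i`
(given a third... actually two suffice for the contradiction via inclusion–exclusion). -/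
lemma FH_key (ρ : ∀ i, S i → ℝ) (hρ : IsPCF ρ)
    (πW : (∀ i, S i) → ℝ) (hdist : IsDist πW)
    (hcdf : ∀ s : ∀ i, S i, cdfLe πW s = max (∑ i, cumul ρ i (s i) + 1 - (n : ℝ)) 0)
    (s s' : ∀ i, S i) (hs : 0 < πW s) (hs' : 0 < πW s')
    (hA : 2 ≤ (Finset.univ.filter (fun i => s' i < s i)).card) : False := by
  classical
  set A := Finset.univ.filter (fun i => s' i < s i) with hAdef
  set j : ∀ i, S i := fun i => max (s i) (s' i) with hj
  set jT : Finset (Fin n) → ∀ i, S i := fun T i => if i ∈ T then s' i else j i with hjT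
  set G : (∀ i, S i) → ℝ := fun t => ∑ i, cumul ρ i (t i) + 1 - (n : ℝ) with hG
  have hπ0 : ∀ t, 0 ≤ πW t := hdist.1
  have hcdfG : ∀ t, cdfLe πW t = max (G t) 0 := hcdf
  have hmono : ∀ (i) (x y : S i), x ≤ y → cumul ρ i x ≤ cumul ρ i y := by
    intro i x y hxy
    apply Finset.sum_le_sum_of_subset_of_nonneg
    · intro z hz
      simp only [mem_filter, mem_univ, true_and] at *
      exact le_trans hz hxy
    · intro z _ _; exact hρ.1 i z
  have hGmono : ∀ t u : ∀ i, S i, (∀ i, t i ≤ u i) → G t ≤ G u := by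
    intro t u htu
    apply sub_le_sub_right
    apply add_le_add_left
    exact Finset.sum_le_sum fun i _ => hmono i _ _ (htu i)
  -- positivity of G s'
  have hcdf_pos : 0 < cdfLe πW s' := by
    refine lt_of_lt_of_le hs' ?_
    apply Finset.single_le_sum (f := πW) (fun t _ => hπ0 t)
    simp
  have hGs' : 0 < G s' := by
    rw [hcdfG s'] at hcdf_pos
    rcases le_or_gt (G s') 0 with h | h
    · rw [max_eq_right h] at hcdf_pos; exact absurd hcdf_pos (lt_irrefl 0)
    · exact h
  have hs'jT : ∀ T (i : Fin n), s' i ≤ jT T i := by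
    intro T i
    simp only [hjT]
    split
    · exact le_rfl
    · exact le_max_right _ _
  have hGjT : ∀ T, 0 < G (jT T) := fun T =>
    lt_of_lt_of_le hGs' (hGmono s' (jT T) (hs'jT T))
  have hcdfjT : ∀ T, cdfLe πW (jT T) = G (jT T) := by
    intro T
    rw [hcdfG, max_eq_left (hGjT T).le]
  -- the alternating sum
  set Φ : ℝ := ∑ T ∈ A.powerset, (-1:ℝ)^T.card * cdfLe πW (jT T) with hΦ
  -- Step 1 : πW s ≤ Φ
  have step1 : πW s ≤ Φ := by
    have hswap : Φ = ∑ t : ∀ i, S i, ∑ T ∈ A.powerset,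
        (if ∀ i, t i ≤ jT T i then (-1:ℝ)^T.card * πW t else 0) := by
      rw [hΦ]
      rw [Finset.sum_comm]
      apply Finset.sum_congr rfl
      intro T _
      rw [cdfLe, Finset.mul_sum, Finset.sum_filter]
    have hcond : ∀ (t : ∀ i, S i) (T : Finset (Fin n)), T ∈ A.powerset →
        ((∀ i, t i ≤ jT T i) ↔ ((∀ i, t i ≤ j i) ∧ T ⊆ A.filter (fun i => t i ≤ s' i))) := by
      intro t T hT
      rw [Finset.mem_powerset] at hT
      constructor
      · intro h
        constructor
        · intro i
          refine le_trans (h i) ?_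
          simp only [hjT]
          split
          · exact le_max_right _ _
          · exact le_rfl
        · intro i hi
          rw [Finset.mem_filter]
          refine ⟨hT hi, ?_⟩
          have := h i
          simp only [hjT, if_pos hi] at this
          exact this
      · rintro ⟨h1, h2⟩ i
        simp only [hjT]
        split
        · next hi => exact (Finset.mem_filter.mp (h2 hi)).2
        · exact h1 i
    have hinner : ∀ t : ∀ i, S i, ∑ T ∈ A.powerset,
        (if ∀ i, t i ≤ jT T i then (-1:ℝ)^T.card * πW t else 0)
        = if (∀ i, t i ≤ j i) ∧ (A.filter (fun i => t i ≤ s' i)) = ∅ then πW t else 0 := by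
      intro t
      by_cases htj : ∀ i, t i ≤ j i
      · have : ∀ T ∈ A.powerset, (if ∀ i, t i ≤ jT T i then (-1:ℝ)^T.card * πW t else 0)
            = if T ⊆ A.filter (fun i => t i ≤ s' i) then (-1:ℝ)^T.card * πW t else 0 := by
          intro T hT
          rw [if_congr ((hcond t T hT).trans (and_iff_right htj)) rfl rfl]
        rw [Finset.sum_congr rfl this]
        rw [← Finset.sum_filter]
        have hps : A.powerset.filter (fun T => T ⊆ A.filter (fun i => t i ≤ s' i))
            = (A.filter (fun i => t i ≤ s' i)).powerset := by
          ext T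
          simp only [Finset.mem_filter, Finset.mem_powerset]
          constructor
          · rintro ⟨_, h⟩; exact h
          · intro h; exact ⟨h.trans (Finset.filter_subset _ _), h⟩
        rw [hps, ← Finset.sum_mul]
        by_cases hemp : A.filter (fun i => t i ≤ s' i) = ∅
        · rw [if_pos ⟨htj, hemp⟩, hemp]
          simp
        · rw [if_neg (fun h => hemp h.2)]
          rw [FH_aux_S0 _ (Finset.nonempty_iff_ne_empty.mpr hemp), zero_mul]
      · rw [if_neg (fun h => htj h.1)]
        apply Finset.sum_eq_zero
        intro T hT
        rw [if_neg]
        intro h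
        exact htj fun i => ((hcond t T hT).mp h).1 i
    rw [hswap, Finset.sum_congr rfl (fun t _ => hinner t)]
    have hif : ((∀ i, s i ≤ j i) ∧ (A.filter (fun i => s i ≤ s' i)) = ∅) := by
      constructor
      · intro i; exact le_max_left _ _
      · rw [Finset.filter_eq_empty_iff]
        intro i hi
        rw [hAdef, Finset.mem_filter] at hi
        exact not_le.mpr hi.2
    have hle := Finset.single_le_sum
      (f := fun t : ∀ i, S i => if (∀ i, t i ≤ j i) ∧ (A.filter (fun i => t i ≤ s' i)) = ∅ then πW t else 0)
      (fun t _ => by split; exacts [hπ0 t, le_rfl]) (Finset.mem_univ s)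
    rw [if_pos hif] at hle
    exact hle
  -- Step 2 : Φ = 0
  have step2 : Φ = 0 := by
    set δ : Fin n → ℝ := fun i => cumul ρ i (j i) - cumul ρ i (s' i) with hδ
    have hGjTval : ∀ T ∈ A.powerset, G (jT T) = G j - ∑ i ∈ T, δ i := by
      intro T _
      have h1 : ∀ i, cumul ρ i (jT T i) = cumul ρ i (j i) - (if i ∈ T then δ i else 0) := by
        intro i
        by_cases hi : i ∈ T
        · simp [hjT, hδ, hi]
        · simp [hjT, hδ, hi]
      rw [hG]
      simp only [h1]
      rw [Finset.sum_sub_distrib, Finset.sum_ite_mem, Finset.univ_inter]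
      ring
    have hAne : A.Nonempty := Finset.card_pos.mp (lt_of_lt_of_le (by norm_num) hA)
    rw [hΦ, Finset.sum_congr rfl (fun T hT => by rw [hcdfjT T, hGjTval T hT])]
    have expand : ∀ T ∈ A.powerset, (-1:ℝ)^T.card * (G j - ∑ i ∈ T, δ i)
        = (-1:ℝ)^T.card * G j - ∑ i ∈ A, (if i ∈ T then (-1:ℝ)^T.card * δ i else 0) := by
      intro T hT
      rw [Finset.mem_powerset] at hT
      have : ∑ i ∈ A, (if i ∈ T then (-1:ℝ)^T.card * δ i else 0)
          = ∑ i ∈ T, (-1:ℝ)^T.card * δ i := by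
        rw [Finset.sum_ite_mem, Finset.inter_eq_right.mpr hT]
      rw [this, ← Finset.mul_sum]
      ring
    rw [Finset.sum_congr rfl expand, Finset.sum_sub_distrib, ← Finset.sum_mul,
      FH_aux_S0 A hAne, zero_mul, Finset.sum_comm]
    rw [zero_sub, neg_eq_zero]
    apply Finset.sum_eq_zero
    intro i hi
    -- ∑ T ∈ A.powerset, if i ∈ T then (-1)^T.card * δ i else 0 = 0
    rw [← Finset.sum_filter]
    have hsplit := Finset.sum_filter_add_sum_filter_not A.powerset (fun T => i ∈ T)
      (fun T => (-1:ℝ)^T.card * δ i)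
    have hnot : A.powerset.filter (fun T => ¬ i ∈ T) = (A.erase i).powerset := by
      ext T
      simp only [Finset.mem_filter, Finset.mem_powerset, Finset.subset_erase]
    have htot : ∑ T ∈ A.powerset, (-1:ℝ)^T.card * δ i = 0 := by
      rw [← Finset.sum_mul, FH_aux_S0 A hAne, zero_mul]
    have herase : ∑ T ∈ (A.erase i).powerset, (-1:ℝ)^T.card * δ i = 0 := by
      rw [← Finset.sum_mul, FH_aux_S0 _ ?_, zero_mul]
      apply Finset.card_pos.mp
      rw [Finset.card_erase_of_mem hi]
      omega
    rw [hnot, herase, add_zero] at hsplit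
    rw [hsplit, htot]
  rw [step2] at step1
  exact absurd (lt_of_lt_of_le hs step1) (lt_irrefl 0)

/-- any two types in the support of the FH-lower-bound representation
differ in at most two components. -/
theorem FH_lower_support_two_diffs [∀ i, Nonempty (S i)]
    (ρ : ∀ i, S i → ℝ) (hρ : IsPCF ρ)
    (πW : (∀ i, S i) → ℝ) (hdist : IsDist πW) (hrep : Represents πW ρ)
    (hcdf : ∀ s : ∀ i, S i, cdfLe πW s = max (∑ i, cumul ρ i (s i) + 1 - (n : ℝ)) 0) :
    ∀ s s' : ∀ i, S i, 0 < πW s → 0 < πW s' →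
      (Finset.univ.filter (fun i => s i ≠ s' i)).card ≤ 2 := by
  classical
  intro s s' hs hs'
  by_contra hcard
  push_neg at hcard
  set A := Finset.univ.filter (fun i => s' i < s i) with hA
  set B := Finset.univ.filter (fun i => s i < s' i) with hB
  have hD : Finset.univ.filter (fun i => s i ≠ s' i) = A ∪ B := by
    rw [hA, hB, ← Finset.filter_or]
    apply Finset.filter_congr
    intro i _
    constructor
    · intro h; rcases lt_or_gt_of_ne h with h' | h'
      · exact Or.inr h'
      · exact Or.inl h'
    · rintro (h | h)
      · exact (ne_of_lt h).symm
      · exact ne_of_lt h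
  have hdisj : Disjoint A B := by
    rw [Finset.disjoint_left]
    intro i hiA hiB
    rw [hA, Finset.mem_filter] at hiA
    rw [hB, Finset.mem_filter] at hiB
    exact absurd (hiA.2.trans hiB.2) (lt_irrefl _)
  rw [hD, Finset.card_union_of_disjoint hdisj] at hcard
  have h2 : 2 ≤ A.card ∨ 2 ≤ B.card := by omega
  rcases h2 with h | h
  · exact FH_key ρ hρ πW hdist hcdf s s' hs hs' h
  · exact FH_key ρ hρ πW hdist hcdf s' s hs' hs h
end

section
/- Let ρ be a probabilistic choice function identified by the Fréchet–Hoeffding lower bound W, with identifying distribution π_W, and let s, s' be choice types in the support of π_W that differ in exactly two components, i.e. |{i : s_i ≠ s'_i}| = 2. Then there exist j, k ∈ {1,…,n} such that s'_j < s_j and s_k < s'_k (the two deviations point in opposite directions with respect to the reference order). -/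
open Finset

variable {n : ℕ} {S : Fin n → Type*} [∀ i, Fintype (S i)] [∀ i, LinearOrder (S i)]

/-!
Write `F = cdfLe πW` and `g s = ∑ i, P_i(s_i) + 1 - n`, so `F = max g 0`. If `a ≤ b` lie in the
support and differ in two coordinates `j ≠ k`, split `b` as the join of the incomparable points
`u = a[j ↦ b j]` and `w = b[j ↦ a j]`, whose meet is `a`. Since `F(a) ≥ πW(a) > 0` and `F` is
monotone, `F = g` on `a, u, w, b`, and `g` is modular: `g u + g w = g b + g a`. But the lower sets
of `u` and `w` meet in that of `a` and their union misses `b`, so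
`F u + F w + πW(b) ≤ F b + F a`, forcing `πW(b) ≤ 0`. Hence two support points differing in two
coordinates are incomparable, which is the claim.
-/

section UpdateSplit

variable {ι : Type*} [DecidableEq ι] {α : ι → Type*}

theorem Function.update_inf_update_swap [∀ i, Lattice (α i)] {a b : ∀ i, α i} (hab : a ≤ b)
    (j : ι) : Function.update a j (b j) ⊓ Function.update b j (a j) = a := by
  ext i
  obtain rfl | hij := eq_or_ne i j
  · simpa using hab i
  · simpa [hij] using hab i

theorem Function.update_sup_update_swap [∀ i, Lattice (α i)] {a b : ∀ i, α i} (hab : a ≤ b)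
    (j : ι) : Function.update a j (b j) ⊔ Function.update b j (a j) = b := by
  ext i
  obtain rfl | hij := eq_or_ne i j
  · simpa using hab i
  · simpa [hij] using hab i

theorem Function.not_update_le_update_swap [∀ i, Preorder (α i)] {a b : ∀ i, α i}
    {j k : ι} (hkj : k ≠ j) (hk : ¬ b k ≤ a k) :
    ¬ Function.update b j (a j) ≤ Function.update a j (b j) := fun h ↦
  hk (by simpa [hkj] using h k)

end UpdateSplit

theorem Finset.sum_apply_sup_add_sum_apply_inf {ι M : Type*} [Fintype ι] [AddCommMonoid M]
    {α : ι → Type*} [∀ i, LinearOrder (α i)] (f : ∀ i, α i → M) (u w : ∀ i, α i) :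
    ∑ i, f i ((u ⊔ w) i) + ∑ i, f i ((u ⊓ w) i) = ∑ i, f i (u i) + ∑ i, f i (w i) := by
  simp only [← Finset.sum_add_distrib]
  refine Finset.sum_congr rfl fun i _ ↦ ?_
  rcases le_total (u i) (w i) with h | h
  · simp [h, add_comm]
  · simp [h]

section CdfLe

variable {π : (∀ i, S i) → ℝ}

theorem cdfLe_mono (hπ : 0 ≤ π) : Monotone (cdfLe π) := fun _ _ hab ↦
  Finset.sum_le_sum_of_subset_of_nonneg
    (fun _ ht ↦ by simpa using fun i ↦ ((Finset.mem_filter.1 ht).2 i).trans (hab i))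
    (fun t _ _ ↦ hπ t)

theorem le_cdfLe (hπ : 0 ≤ π) (s : ∀ i, S i) : π s ≤ cdfLe π s :=
  Finset.single_le_sum (f := π) (fun t _ ↦ hπ t) (by simp)

theorem cdfLe_add_cdfLe_add_apply_sup_le (hπ : 0 ≤ π) {u w : ∀ i, S i} (huw : ¬ u ≤ w)
    (hwu : ¬ w ≤ u) :
    cdfLe π u + cdfLe π w + π (u ⊔ w) ≤ cdfLe π (u ⊔ w) + cdfLe π (u ⊓ w) := by
  set lowerSet : (∀ i, S i) → Finset (∀ i, S i) := fun s ↦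
    Finset.univ.filter (fun t ↦ ∀ i, t i ≤ s i)
  have hmem : ∀ s t, t ∈ lowerSet s ↔ t ≤ s := fun _ _ ↦ by simp [lowerSet, Pi.le_def]
  have hinter : lowerSet u ∩ lowerSet w = lowerSet (u ⊓ w) := by
    ext t
    simp only [Finset.mem_inter, hmem, le_inf_iff]
  have hunion : lowerSet u ∪ lowerSet w ⊆ (lowerSet (u ⊔ w)).erase (u ⊔ w) := by
    intro t ht
    simp only [Finset.mem_union, Finset.mem_erase, hmem] at ht ⊢
    rcases ht with ht | ht
    · exact ⟨fun h ↦ hwu (le_sup_right.trans (h ▸ ht)), ht.trans le_sup_left⟩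
    · exact ⟨fun h ↦ huw (le_sup_left.trans (h ▸ ht)), ht.trans le_sup_right⟩
  have hsup : u ⊔ w ∈ lowerSet (u ⊔ w) := (hmem _ _).2 le_rfl
  have hcdf : ∀ s, cdfLe π s = ∑ t ∈ lowerSet s, π t := fun _ ↦ rfl
  rw [hcdf, hcdf, hcdf, hcdf, ← hinter, ← Finset.add_sum_erase _ _ hsup, ← Finset.sum_union_inter]
  linarith [Finset.sum_le_sum_of_subset_of_nonneg hunion fun t _ _ ↦ hπ t]

theorem apply_sup_le_zero_of_cdfLe_eq_max (hπ : 0 ≤ π) {f : ∀ i, S i → ℝ} {c : ℝ}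
    (hcdf : ∀ s, cdfLe π s = max (∑ i, f i (s i) + c) 0) {u w : ∀ i, S i} (huw : ¬ u ≤ w)
    (hwu : ¬ w ≤ u) (hpos : 0 < cdfLe π (u ⊓ w)) : π (u ⊔ w) ≤ 0 := by
  have hsep : ∀ s, u ⊓ w ≤ s → cdfLe π s = ∑ i, f i (s i) + c := fun s hs ↦ by
    have h := hcdf s ▸ hpos.trans_le (cdfLe_mono hπ hs)
    rw [hcdf, max_eq_left (lt_max_iff.1 h |>.resolve_right (lt_irrefl 0)).le]
  have hmod := Finset.sum_apply_sup_add_sum_apply_inf f u w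
  have := cdfLe_add_cdfLe_add_apply_sup_le hπ huw hwu
  rw [hsep u inf_le_left, hsep w inf_le_right, hsep (u ⊔ w) (inf_le_left.trans le_sup_left),
    hsep (u ⊓ w) le_rfl] at this
  linarith

theorem card_filter_ne_le_one_of_le (hπ : 0 ≤ π) {f : ∀ i, S i → ℝ} {c : ℝ}
    (hcdf : ∀ s, cdfLe π s = max (∑ i, f i (s i) + c) 0) {a b : ∀ i, S i} (hab : a ≤ b)
    (ha : 0 < π a) (hb : 0 < π b) : (Finset.univ.filter fun i ↦ a i ≠ b i).card ≤ 1 := by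
  by_contra! h
  obtain ⟨j, hj, k, hk, hkj⟩ := Finset.one_lt_card.1 h
  simp only [Finset.mem_filter, Finset.mem_univ, true_and] at hj hk
  have hj' : ¬ b j ≤ a j := fun h ↦ hj (le_antisymm (hab j) h)
  have hk' : ¬ b k ≤ a k := fun h ↦ hk (le_antisymm (hab k) h)
  have := apply_sup_le_zero_of_cdfLe_eq_max hπ hcdf
    (fun h ↦ hj' (by simpa using h j)) (Function.not_update_le_update_swap hkj.symm hk')
    (by rw [Function.update_inf_update_swap hab]; exact ha.trans_le (le_cdfLe hπ a))
  rw [Function.update_sup_update_swap hab] at this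
  linarith

end CdfLe

theorem FH_lower_support_opposite_deviations_general
    (ρ : ∀ i, S i → ℝ)
    (πW : (∀ i, S i) → ℝ) (hdist : IsDist πW)
    (hcdf : ∀ s : ∀ i, S i, cdfLe πW s = max (∑ i, cumul ρ i (s i) + 1 - (n : ℝ)) 0)
    (s s' : ∀ i, S i) (hs : 0 < πW s) (hs' : 0 < πW s')
    (hdiff : (Finset.univ.filter (fun i => s i ≠ s' i)).card = 2) :
    ∃ j k : Fin n, s' j < s j ∧ s k < s' k := by
  have hcdf' : ∀ t, cdfLe πW t = max (∑ i, cumul ρ i (t i) + (1 - n)) 0 := fun t ↦ by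
    rw [hcdf, add_sub_assoc]
  have hdiff' : (Finset.univ.filter fun i ↦ s' i ≠ s i).card = 2 := by
    simpa only [ne_comm] using hdiff
  have hnle : ¬ s ≤ s' := fun h ↦ by
    have := card_filter_ne_le_one_of_le hdist.1 hcdf' h hs hs'
    omega
  have hnle' : ¬ s' ≤ s := fun h ↦ by
    have := card_filter_ne_le_one_of_le hdist.1 hcdf' h hs' hs
    omega
  simp only [Pi.le_def, not_forall, not_le] at hnle hnle'
  obtain ⟨j, hj⟩ := hnle
  obtain ⟨k, hk⟩ := hnle'
  exact ⟨j, k, hj, hk⟩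

/-- if two types in the support of the FH-lower-bound representation
differ in exactly two components, the two deviations point in opposite directions. -/
theorem FH_lower_support_opposite_deviations [∀ i, Nonempty (S i)]
    (ρ : ∀ i, S i → ℝ) (hρ : IsPCF ρ)
    (πW : (∀ i, S i) → ℝ) (hdist : IsDist πW) (hrep : Represents πW ρ)
    (hcdf : ∀ s : ∀ i, S i, cdfLe πW s = max (∑ i, cumul ρ i (s i) + 1 - (n : ℝ)) 0)
    (s s' : ∀ i, S i) (hs : 0 < πW s) (hs' : 0 < πW s')
    (hdiff : (Finset.univ.filter (fun i => s i ≠ s' i)).card = 2) :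
    ∃ j k : Fin n, s' j < s j ∧ s k < s' k :=
  FH_lower_support_opposite_deviations_general ρ πW hdist hcdf s s' hs hs' hdiff
end

section
/- Let ρ be a probabilistic choice function identified by the Fréchet–Hoeffding lower bound W, with identifying distribution π_W. Suppose that for every pair i, j ∈ {1,…,n} there exists k ∈ {1,…,n} \ {i, j} such that ρ_k(y) < 1 for every y ∈ S_k (i.e., condition II fails). Let α, β ∈ supp(π_W) and i, j ∈ {1,…,n} be such that β_i < α_i and α_j < β_j. Then there exist γ ∈ supp(π_W) and k* ∈ {1,…,n} such that: (1) γ_{k*} ≠ α_{k*} and α_{k*} = β_{k*}; and (2) if γ_{k*} < α_{k*} then α and β are each 1-mistake away from s̄^ρ, while if α_{k*} < γ_{k*} then α and β are each 1-mistake away from s̲^ρ. -/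
/-!
For `s` in the support of `π_W` the Fréchet–Hoeffding bound at `s` is positive, so
`1 - π_W(⊴ s) = ∑ₗ (1 - P_l(s_l))`: the union bound for the events `{t : s_l < t_l}` holds with
equality, hence on the support these events are disjoint, i.e. no support point exceeds another
one in two coordinates. The rest is order combinatorics of this property. `α` and `β` agree off
`{i, j}`, a non-degenerate third coordinate `k*` supplies `γ`, and comparing `α`, `β`, `γ` with
support points attaining the coordinatewise maxima pins `α` and `β` down to `s̄` off a single
coordinate. The case `α_{k*} < γ_{k*}` is the same argument for the reversed orders.
-/

open Finset

variable {n : ℕ} {S : Fin n → Type*} [∀ i, Fintype (S i)] [∀ i, LinearOrder (S i)]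

section OrderCombinatorics

variable {ι : Type*} {X : ι → Type*} [∀ i, LinearOrder (X i)]

def ExceedsAtMostOnce (T : Set (∀ i, X i)) : Prop :=
  ∀ ⦃s⦄, s ∈ T → ∀ ⦃t⦄, t ∈ T → ∀ ⦃l m⦄, s l < t l → s m < t m → l = m

variable {T : Set (∀ i, X i)} {top α β γ : ∀ i, X i} {j k k' : ι}

namespace ExceedsAtMostOnce

theorem le_of_lt (hT : ExceedsAtMostOnce T) {s t : ∀ i, X i} (hs : s ∈ T) (ht : t ∈ T) {l m : ι}
    (hl : s l < t l) (hm : m ≠ l) : t m ≤ s m :=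
  le_of_not_gt fun h => hm (hT hs ht h hl)

theorem dual (hT : ExceedsAtMostOnce T) : ExceedsAtMostOnce (X := fun i => (X i)ᵒᵈ) T :=
  fun _ hs _ ht _ _ hl hm => hT ht hs hl hm

theorem eq_top_of_ne_of_ne (hT : ExceedsAtMostOnce T)
    (htop : ∀ l, IsGreatest ((fun δ => δ l) '' T) (top l))
    (hα : α ∈ T) (hβ : β ∈ T) (hγ : γ ∈ T) (hj : α j < β j) (hk : α k = β k) (hγk : γ k < α k)
    {l : ι} (hlj : l ≠ j) (hlk : l ≠ k) : α l = top l := by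
  have hkj : k ≠ j := by rintro rfl; exact hj.ne hk
  have hγα : γ l ≤ α l :=
    hT.le_of_lt hα hγ (hj.trans_le (hT.le_of_lt hγ hβ (hγk.trans_eq hk) hkj.symm)) hlj
  by_contra hne
  obtain ⟨δ, hδ, hδl⟩ := (htop l).1
  have hαδ : α l < δ l := (lt_of_le_of_ne ((htop l).2 ⟨α, hα, rfl⟩) hne).trans_eq hδl.symm
  rcases (hT.le_of_lt hα hδ hαδ hlk.symm).lt_or_eq with hδk | hδk
  · -- then `β` exceeds `δ` at `k` and at `j`
    exact hkj (hT hδ hβ (hδk.trans_eq hk) ((hT.le_of_lt hα hδ hαδ hlj.symm).trans_lt hj))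
  · -- then `δ` exceeds `γ` at `l` and at `k`
    exact hlk (hT hγ hδ (hγα.trans_lt hαδ) (hγk.trans_eq hδk.symm))

theorem eq_top_of_ne (hT : ExceedsAtMostOnce T)
    (htop : ∀ l, IsGreatest ((fun δ => δ l) '' T) (top l))
    (hα : α ∈ T) (hβ : β ∈ T) (hγ : γ ∈ T) (hj : α j < β j) (hk : α k = β k) (hγk : γ k < α k)
    (hk'k : k' ≠ k) (hk'j : k' ≠ j) (hk' : ∀ x, ∃ δ ∈ T, δ k' ≠ x) {l : ι} (hlj : l ≠ j) :
    α l = top l := by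
  have hαk' : α k' = top k' := hT.eq_top_of_ne_of_ne htop hα hβ hγ hj hk hγk hk'j hk'k
  obtain ⟨γ', hγ', hγ'k'⟩ := hk' (α k')
  have hγ'α : γ' k' < α k' :=
    lt_of_le_of_ne (((htop k').2 ⟨γ', hγ', rfl⟩).trans_eq hαk'.symm) hγ'k'
  have hkj : k ≠ j := by rintro rfl; exact hj.ne hk
  -- `γ` can play the role of `β` for the coordinate `k'`
  have hαγj : α j < γ j := hj.trans_le (hT.le_of_lt hγ hβ (hγk.trans_eq hk) hkj.symm)
  have hαγk' : α k' = γ k' :=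
    le_antisymm (hT.le_of_lt hγ hα hγk hk'k) (hT.le_of_lt hα hγ hαγj hk'j)
  rcases eq_or_ne l k with rfl | hlk
  · exact hT.eq_top_of_ne_of_ne htop hα hγ hγ' hαγj hαγk' hγ'α hlj hk'k.symm
  · exact hT.eq_top_of_ne_of_ne htop hα hβ hγ hj hk hγk hlj hlk

end ExceedsAtMostOnce

end OrderCombinatorics

section Support

variable {ρ : ∀ i, S i → ℝ} {π : (∀ i, S i) → ℝ}

theorem pos_eval_of_pos (hdist : IsDist π) (hrep : Represents π ρ) {δ : ∀ i, S i}
    (hδ : 0 < π δ) (l : Fin n) : 0 < ρ l (δ l) :=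
  hrep l (δ l) ▸ hδ.trans_le (single_le_sum (fun t _ => hdist.1 t) (by simp))

theorem exists_pos_eval_eq (hrep : Represents π ρ) {l : Fin n} {x : S l}
    (hx : 0 < ρ l x) : ∃ δ, 0 < π δ ∧ δ l = x := by
  by_contra! h
  have : ∑ t ∈ univ.filter (fun t : ∀ i, S i => t l = x), π t ≤ 0 :=
    sum_nonpos fun t ht => not_lt.1 fun hpos => h t hpos (mem_filter.1 ht).2
  linarith [hrep l x]

theorem image_eval_support (hdist : IsDist π) (hrep : Represents π ρ) (l : Fin n) :
    (fun δ => δ l) '' {s | 0 < π s} = {x | 0 < ρ l x} := by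
  ext x
  constructor
  · rintro ⟨δ, hδ, rfl⟩
    exact pos_eval_of_pos hdist hrep hδ l
  · intro hx
    obtain ⟨δ, hδ, rfl⟩ := exists_pos_eval_eq hrep hx
    exact ⟨δ, hδ, rfl⟩

theorem exists_pos_eval_ne (hdist : IsDist π) (hrep : Represents π ρ) {l : Fin n} {x : S l}
    (hx : ρ l x < 1) : ∃ δ, 0 < π δ ∧ δ l ≠ x := by
  by_contra! h
  have : ∑ t ∈ univ.filter (fun t : ∀ i, S i => t l = x), π t = ∑ t, π t :=
    sum_filter_of_ne fun t _ ht => h t ((hdist.1 t).lt_of_ne' ht)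
  linarith [hrep l x, hdist.2]

theorem sum_filter_eval_le (hrep : Represents π ρ) (l : Fin n) (x : S l) :
    ∑ t ∈ univ.filter (fun t : ∀ i, S i => t l ≤ x), π t = cumul ρ l x := by
  rw [cumul, ← sum_fiberwise_of_maps_to (g := fun t : ∀ i, S i => t l)
    (t := univ.filter (· ≤ x)) (fun t ht => by simpa using ht)]
  refine sum_congr rfl fun y hy => ?_
  rw [← hrep l y, filter_filter]
  refine sum_congr (filter_congr fun t _ => ?_) fun _ _ => rfl
  simp only [mem_filter, mem_univ, true_and] at hy
  exact ⟨And.right, fun h => ⟨h ▸ hy, h⟩⟩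

theorem sum_filter_lt_eval (hdist : IsDist π) (hrep : Represents π ρ) (l : Fin n) (x : S l) :
    ∑ t ∈ univ.filter (fun t : ∀ i, S i => x < t l), π t = 1 - cumul ρ l x := by
  have := sum_filter_add_sum_filter_not univ (fun t : ∀ i, S i => t l ≤ x) π
  simp only [not_le, sum_filter_eval_le hrep, hdist.2] at this
  linarith

theorem sum_filter_not_le (hdist : IsDist π) (s : ∀ i, S i) :
    ∑ t ∈ univ.filter (fun t : ∀ i, S i => ¬ ∀ i, t i ≤ s i), π t = 1 - cdfLe π s := by
  have := sum_filter_add_sum_filter_not univ (fun t : ∀ i, S i => ∀ i, t i ≤ s i) π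
  rw [hdist.2] at this
  rw [cdfLe]
  linarith

theorem cdfLe_eq_of_pos (hdist : IsDist π)
    (hcdf : ∀ s : ∀ i, S i, cdfLe π s = max (∑ i, cumul ρ i (s i) + 1 - (n : ℝ)) 0)
    {s : ∀ i, S i} (hs : 0 < π s) : cdfLe π s = ∑ i, cumul ρ i (s i) + 1 - (n : ℝ) := by
  have hpos : 0 < cdfLe π s := hs.trans_le (single_le_sum (fun t _ => hdist.1 t) (by simp))
  rw [hcdf] at hpos ⊢
  exact (max_choice _ _).resolve_right fun h => by rw [h] at hpos; exact hpos.false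

theorem sum_card_filter_lt_mul_eq_of_pos (hdist : IsDist π) (hrep : Represents π ρ)
    (hcdf : ∀ s : ∀ i, S i, cdfLe π s = max (∑ i, cumul ρ i (s i) + 1 - (n : ℝ)) 0)
    {s : ∀ i, S i} (hs : 0 < π s) :
    ∑ t, ((univ.filter fun l => s l < t l).card : ℝ) * π t = 1 - cdfLe π s :=
  calc ∑ t, ((univ.filter fun l => s l < t l).card : ℝ) * π t
      = ∑ l, ∑ t ∈ univ.filter (fun t : ∀ i, S i => s l < t l), π t := by
        simp only [card_filter, Nat.cast_sum, Nat.cast_ite, Nat.cast_one, Nat.cast_zero,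
          sum_mul, ite_mul, one_mul, zero_mul, sum_filter]
        exact sum_comm
    _ = ∑ l, (1 - cumul ρ l (s l)) :=
        sum_congr rfl fun l _ => sum_filter_lt_eval hdist hrep l _
    _ = 1 - cdfLe π s := by
        rw [cdfLe_eq_of_pos hdist hcdf hs, sum_sub_distrib]
        simp only [sum_const, card_univ, Fintype.card_fin, nsmul_eq_mul, mul_one]
        ring

-- `1 - π(⊴ s)` counts each `t ⋬ s` once, `∑ₗ π{t | s l < t l}` once per coordinate in which `t`
-- exceeds `s`; for `s` in the support the two agree, so no `t` exceeds `s` twice.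
theorem exceedsAtMostOnce_support (hdist : IsDist π) (hrep : Represents π ρ)
    (hcdf : ∀ s : ∀ i, S i, cdfLe π s = max (∑ i, cumul ρ i (s i) + 1 - (n : ℝ)) 0) :
    ExceedsAtMostOnce {s | 0 < π s} := by
  intro s hs t ht l m hl hm
  by_contra hlm
  have hlt : ∑ t' ∈ univ.filter (fun t' : ∀ i, S i => ¬ ∀ i, t' i ≤ s i), π t' <
      ∑ t', ((univ.filter fun l' => s l' < t' l').card : ℝ) * π t' := by
    rw [sum_filter]
    refine sum_lt_sum (fun t' _ => ?_) ⟨t, mem_univ t, ?_⟩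
    · by_cases h : ∀ i, t' i ≤ s i
      · rw [if_neg (not_not_intro h)]
        exact mul_nonneg (Nat.cast_nonneg _) (hdist.1 t')
      · obtain ⟨i, hi⟩ := not_forall.1 h
        have : 1 ≤ (univ.filter fun l' => s l' < t' l').card := card_pos.2 ⟨i, by simpa using hi⟩
        rw [if_pos h]
        exact le_mul_of_one_le_left (hdist.1 t') (by exact_mod_cast this)
    · have h2 : 2 ≤ (univ.filter fun l' => s l' < t l').card :=
        (card_pair hlm).symm.trans_le <| card_le_card fun a ha => by
          rcases mem_insert.1 ha with rfl | ha <;> simp_all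
      rw [if_pos fun h => (h l).not_gt hl]
      exact lt_mul_of_one_lt_left ht (by exact_mod_cast h2)
  rw [sum_filter_not_le hdist, sum_card_filter_lt_mul_eq_of_pos hdist hrep hcdf hs] at hlt
  exact hlt.false

end Support

theorem card_filter_ne_le_one {ι : Type*} [Fintype ι] {X : ι → Type*} {a b : ∀ i, X i}
    [DecidablePred fun l => a l ≠ b l] {j : ι} (h : ∀ l, l ≠ j → a l = b l) :
    (univ.filter fun l => a l ≠ b l).card ≤ 1 :=
  card_le_one.2 fun l hl l' hl' =>
    (of_not_not fun hlj => (mem_filter.1 hl).2 (h l hlj)).trans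
      (of_not_not fun hlj => (mem_filter.1 hl').2 (h l' hlj)).symm

theorem FH_lower_key_lemma_general
    (ρ : ∀ i, S i → ℝ)
    (πW : (∀ i, S i) → ℝ) (hdist : IsDist πW) (hrep : Represents πW ρ)
    (hcdf : ∀ s : ∀ i, S i, cdfLe πW s = max (∑ i, cumul ρ i (s i) + 1 - (n : ℝ)) 0)
    (sbar : ∀ i, S i)
    (hsbar : ∀ i, 0 < ρ i (sbar i) ∧ ∀ x : S i, 0 < ρ i x → x ≤ sbar i)
    (sund : ∀ i, S i)
    (hsund : ∀ i, 0 < ρ i (sund i) ∧ ∀ x : S i, 0 < ρ i x → sund i ≤ x)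
    (hII : ∀ i j : Fin n, ∃ k, k ≠ i ∧ k ≠ j ∧ ∀ y : S k, ρ k y < 1)
    (α β : ∀ i, S i) (hα : 0 < πW α) (hβ : 0 < πW β)
    (i j : Fin n) (hi : β i < α i) (hj : α j < β j) :
    ∃ γ : ∀ i, S i, 0 < πW γ ∧ ∃ k : Fin n,
      γ k ≠ α k ∧ α k = β k ∧
      (γ k < α k →
        (Finset.univ.filter (fun l => α l ≠ sbar l)).card ≤ 1 ∧
        (Finset.univ.filter (fun l => β l ≠ sbar l)).card ≤ 1) ∧
      (α k < γ k →
        (Finset.univ.filter (fun l => α l ≠ sund l)).card ≤ 1 ∧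
        (Finset.univ.filter (fun l => β l ≠ sund l)).card ≤ 1) := by
  have hT := exceedsAtMostOnce_support hdist hrep hcdf
  have hnondeg : ∀ k, (∀ y : S k, ρ k y < 1) → ∀ x, ∃ δ ∈ {s | 0 < πW s}, δ k ≠ x :=
    fun k hk x => exists_pos_eval_ne hdist hrep (hk x)
  have htop l : IsGreatest ((fun δ => δ l) '' {s | 0 < πW s}) (sbar l) := by
    rw [image_eval_support hdist hrep]; exact hsbar l
  have hbot l : IsLeast ((fun δ => δ l) '' {s | 0 < πW s}) (sund l) := by
    rw [image_eval_support hdist hrep]; exact hsund l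
  obtain ⟨k, hki, hkj, hk⟩ := hII i j
  have hαβ : α k = β k := le_antisymm (hT.le_of_lt hβ hα hi hki) (hT.le_of_lt hα hβ hj hkj)
  obtain ⟨γ, hγ, hγk⟩ := hnondeg k hk (α k)
  obtain ⟨k₁, hk₁k, hk₁j, hk₁⟩ := hII k j
  obtain ⟨k₂, hk₂k, hk₂i, hk₂⟩ := hII k i
  refine ⟨γ, hγ, k, hγk, hαβ, fun hlt => ⟨?_, ?_⟩, fun hgt => ⟨?_, ?_⟩⟩
  · exact card_filter_ne_le_one fun l hl =>
      hT.eq_top_of_ne htop hα hβ hγ hj hαβ hlt hk₁k hk₁j (hnondeg k₁ hk₁) hl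
  · exact card_filter_ne_le_one fun l hl =>
      hT.eq_top_of_ne htop hβ hα hγ hi hαβ.symm (hlt.trans_eq hαβ) hk₂k hk₂i (hnondeg k₂ hk₂) hl
  · exact card_filter_ne_le_one fun l hl =>
      hT.dual.eq_top_of_ne (fun l => (hbot l).dual) hα hβ hγ hi hαβ hgt hk₂k hk₂i
        (hnondeg k₂ hk₂) hl
  · exact card_filter_ne_le_one fun l hl =>
      hT.dual.eq_top_of_ne (fun l => (hbot l).dual) hβ hα hγ hj hαβ.symm (hαβ ▸ hgt) hk₁k hk₁j
        (hnondeg k₁ hk₁) hl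

/-- key lemma for the FH-lower-bound characterization, when condition II fails. -/
theorem FH_lower_key_lemma [∀ i, Nonempty (S i)]
    (ρ : ∀ i, S i → ℝ) (hρ : IsPCF ρ)
    (πW : (∀ i, S i) → ℝ) (hdist : IsDist πW) (hrep : Represents πW ρ)
    (hcdf : ∀ s : ∀ i, S i, cdfLe πW s = max (∑ i, cumul ρ i (s i) + 1 - (n : ℝ)) 0)
    (sbar : ∀ i, S i)
    (hsbar : ∀ i, 0 < ρ i (sbar i) ∧ ∀ x : S i, 0 < ρ i x → x ≤ sbar i)
    (sund : ∀ i, S i)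
    (hsund : ∀ i, 0 < ρ i (sund i) ∧ ∀ x : S i, 0 < ρ i x → sund i ≤ x)
    (hII : ∀ i j : Fin n, ∃ k, k ≠ i ∧ k ≠ j ∧ ∀ y : S k, ρ k y < 1)
    (α β : ∀ i, S i) (hα : 0 < πW α) (hβ : 0 < πW β)
    (i j : Fin n) (hi : β i < α i) (hj : α j < β j) :
    ∃ γ : ∀ i, S i, 0 < πW γ ∧ ∃ k : Fin n,
      γ k ≠ α k ∧ α k = β k ∧
      (γ k < α k →
        (Finset.univ.filter (fun l => α l ≠ sbar l)).card ≤ 1 ∧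
        (Finset.univ.filter (fun l => β l ≠ sbar l)).card ≤ 1) ∧
      (α k < γ k →
        (Finset.univ.filter (fun l => α l ≠ sund l)).card ≤ 1 ∧
        (Finset.univ.filter (fun l => β l ≠ sund l)).card ≤ 1) :=
  FH_lower_key_lemma_general ρ πW hdist hrep hcdf sbar hsbar sund hsund hII α β hα hβ i j hi hj
end

section
/- Let ρ be a probabilistic choice function and let C : [0,1]^n → ℝ be a copula. Then there exists a unique probability distribution π over choice types such that π(⊴ s) = C(P_1(s_1), P_2(s_2), …, P_n(s_n)) for every choice type s; moreover, this π represents ρ (each copula serves as an identification method producing a representation of any ordered probabilistic choice). -/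
open Finset

variable {n : ℕ} {S : Fin n → Type*} [∀ i, Fintype (S i)] [∀ i, LinearOrder (S i)]

/-- `C` is an `n`-dimensional copula on `[0,1]^n`: grounded, uniform margins,
and `n`-increasing (nonnegative volume of every hyperrectangle in `[0,1]^n`). -/
def IsCopula (C : (Fin n → ℝ) → ℝ) : Prop :=
  (∀ u : Fin n → ℝ, (∀ i, 0 ≤ u i ∧ u i ≤ 1) → (∃ i, u i = 0) → C u = 0) ∧
  (∀ u : Fin n → ℝ, (∀ i, 0 ≤ u i ∧ u i ≤ 1) → ∀ i, (∀ j, j ≠ i → u j = 1) → C u = u i) ∧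
  (∀ a b : Fin n → ℝ, (∀ i, 0 ≤ a i ∧ a i ≤ 1) → (∀ i, 0 ≤ b i ∧ b i ≤ 1) →
    (∀ i, a i ≤ b i) →
    0 ≤ ∑ A : Finset (Fin n), (-1 : ℝ) ^ A.card * C (fun i => if i ∈ A then a i else b i))

/-!
For a choice type `s`, the candidate `π(s)` is the `C`-volume of the box
`∏ i, [P⁻_i(s_i), P_i(s_i)]` with `P⁻_i(x) = ∑_{y < x} ρ_i(y)`; it is nonnegative because `C` is
`n`-increasing. Inclusion–exclusion over the coordinates in which `t < s` writes the mass of any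
distribution at `s` as an alternating sum of the masses of the corners
`{t ⊴ s | t_i < s_i for i ∈ A}`. A corner is empty or the lower set of a single choice type, so when
the distribution function is `C ∘ P` the mass of a corner is the value of `C` at a vertex of the
box. Hence a distribution with distribution function `C ∘ P` must be the candidate, and
well-founded induction on `s` shows that the candidate has it. Its marginals are then read off
from the uniform margins of `C`.
-/

section InclusionExclusion

variable {ι : Type*} [Fintype ι] [DecidableEq ι] {α : ι → Type*} [∀ i, Fintype (α i)]
  [∀ i, PartialOrder (α i)] [∀ i, DecidableLE (α i)] [∀ i, DecidableLT (α i)]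

def corner (s : ∀ i, α i) (A : Finset ι) : Finset (∀ i, α i) :=
  (univ.filter fun t => ∀ i, t i ≤ s i).filter fun t => ∀ i ∈ A, t i < s i

theorem sum_neg_one_pow_mul_sum_corner {R : Type*} [CommRing R] (f : (∀ i, α i) → R)
    (s : ∀ i, α i) :
    ∑ A : Finset ι, (-1) ^ A.card * ∑ t ∈ corner s A, f t = f s := by
  have hsign : ∀ t : ∀ i, α i,
      ∑ A : Finset ι, (if ∀ i ∈ A, t i < s i then (-1 : R) ^ A.card else 0)
        = if ∀ i, ¬ t i < s i then 1 else 0 := by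
    intro t
    have hfilter : univ.filter (fun A : Finset ι => ∀ i ∈ A, t i < s i)
        = (univ.filter fun i => t i < s i).powerset := by
      ext A; simp [subset_iff]
    have halt := congrArg (Int.cast : ℤ → R)
      (sum_powerset_neg_one_pow_card (x := univ.filter fun i => t i < s i))
    push_cast at halt
    rw [← sum_filter, hfilter, halt]
    simp [filter_eq_empty_iff]
  have hbottom :
      (univ.filter fun t => ∀ i, t i ≤ s i).filter (fun t => ∀ i, ¬ t i < s i) = {s} := by
    ext t
    simp only [mem_filter, mem_univ, true_and, mem_singleton]
    constructor
    · rintro ⟨hle, hnlt⟩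
      exact funext fun i => (hle i).eq_or_lt.resolve_right (hnlt i)
    · rintro rfl
      simp
  calc ∑ A : Finset ι, (-1) ^ A.card * ∑ t ∈ corner s A, f t
      = ∑ t ∈ univ.filter (fun t => ∀ i, t i ≤ s i),
          f t * ∑ A : Finset ι, (if ∀ i ∈ A, t i < s i then (-1 : R) ^ A.card else 0) := by
        simp only [corner, sum_filter (s := univ.filter _), mul_sum]
        rw [sum_comm]
        refine sum_congr rfl fun t _ => sum_congr rfl fun A _ => ?_
        split_ifs <;> ring
    _ = f s := by
        simp only [hsign, mul_ite, mul_one, mul_zero]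
        rw [← sum_filter, hbottom, sum_singleton]

end InclusionExclusion

theorem eq_of_forall_sum_filter_le_eq {α R : Type*} [Fintype α] [PartialOrder α] [DecidableEq α]
    [DecidableLE α] [DecidableLT α] [AddCommGroup R] {f g : α → R}
    (h : ∀ x, ∑ y ∈ univ.filter (· ≤ x), f y = ∑ y ∈ univ.filter (· ≤ x), g y) : f = g := by
  funext x
  induction x using WellFoundedLT.induction with
  | _ x ih =>
    have hlt : ∑ y ∈ univ.filter (· < x), f y = ∑ y ∈ univ.filter (· < x), g y :=
      sum_congr rfl fun y hy => ih y (mem_filter.1 hy).2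
    have hsplit : univ.filter (· ≤ x) = insert x (univ.filter (· < x)) := by
      ext y; simp [le_iff_lt_or_eq, or_comm]
    have hx := h x
    rw [hsplit, sum_insert (by simp), sum_insert (by simp), hlt] at hx
    exact add_right_cancel hx

theorem sum_filter_mem_unitInterval {α : Type*} [Fintype α] {p : α → ℝ} (hp : ∀ x, 0 ≤ p x)
    (hp1 : ∑ x, p x = 1) (q : α → Prop) [DecidablePred q] :
    0 ≤ ∑ x ∈ univ.filter q, p x ∧ ∑ x ∈ univ.filter q, p x ≤ 1 :=
  ⟨sum_nonneg fun x _ => hp x,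
    hp1 ▸ sum_le_sum_of_subset_of_nonneg (filter_subset _ _) fun x _ _ => hp x⟩

theorem exists_forall_lt_iff_le {α : Type*} [Finite α] [LinearOrder α] {x : α}
    (hx : ∃ y, y < x) : ∃ p, ∀ y, y < x ↔ y ≤ p := by
  have : Nonempty {y // y < x} := let ⟨y, hy⟩ := hx; ⟨⟨y, hy⟩⟩
  obtain ⟨p, hp⟩ := Finite.exists_max (Subtype.val : {y // y < x} → α)
  exact ⟨p, fun y => ⟨fun hy => hp ⟨y, hy⟩, fun hy => hy.trans_lt p.2⟩⟩

section Copula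

variable {ρ : ∀ i, S i → ℝ} {C : (Fin n → ℝ) → ℝ}

noncomputable def cumulLt (ρ : ∀ i, S i → ℝ) (i : Fin n) (x : S i) : ℝ :=
  ∑ y ∈ univ.filter (· < x), ρ i y

noncomputable def cornerPoint (ρ : ∀ i, S i → ℝ) (A : Finset (Fin n)) (s : ∀ i, S i) :
    Fin n → ℝ :=
  fun i => if i ∈ A then cumulLt ρ i (s i) else cumul ρ i (s i)

noncomputable def copulaDist (ρ : ∀ i, S i → ℝ) (C : (Fin n → ℝ) → ℝ) (s : ∀ i, S i) : ℝ :=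
  ∑ A : Finset (Fin n), (-1) ^ A.card * C (cornerPoint ρ A s)

theorem IsPCF.cumulLt_le_cumul (hρ : IsPCF ρ) (i : Fin n) (x : S i) :
    cumulLt ρ i x ≤ cumul ρ i x :=
  sum_le_sum_of_subset_of_nonneg (fun y hy => mem_filter.2 ⟨mem_univ y, (mem_filter.1 hy).2.le⟩)
    fun y _ _ => hρ.1 i y

theorem IsPCF.cornerPoint_mem_unitInterval (hρ : IsPCF ρ) (A : Finset (Fin n)) (s : ∀ i, S i)
    (i : Fin n) : 0 ≤ cornerPoint ρ A s i ∧ cornerPoint ρ A s i ≤ 1 := by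
  unfold cornerPoint cumulLt cumul
  split_ifs <;> exact sum_filter_mem_unitInterval (hρ.1 i) (hρ.2 i) _

theorem IsPCF.cumul_eq_one (hρ : IsPCF ρ) {i : Fin n} {x : S i} (hx : ∀ y, y ≤ x) :
    cumul ρ i x = 1 := by
  rw [cumul, filter_true_of_mem fun y _ => hx y, hρ.2 i]

theorem copulaDist_nonneg (hρ : IsPCF ρ) (hC : IsCopula C) (s : ∀ i, S i) :
    0 ≤ copulaDist ρ C s :=
  hC.2.2 _ _ (fun i => sum_filter_mem_unitInterval (hρ.1 i) (hρ.2 i) _)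
    (fun i => sum_filter_mem_unitInterval (hρ.1 i) (hρ.2 i) _)
    fun i => hρ.cumulLt_le_cumul i (s i)

theorem sum_corner_eq_of_cdfLe_eq (hρ : IsPCF ρ) (hC : IsCopula C) {π : (∀ i, S i) → ℝ}
    {s : ∀ i, S i} {A : Finset (Fin n)}
    (h : ∀ t ∈ corner s A, cdfLe π t = C (fun i => cumul ρ i (t i))) :
    ∑ t ∈ corner s A, π t = C (cornerPoint ρ A s) := by
  by_cases hmin : ∃ i ∈ A, ∀ y, ¬ y < s i
  · obtain ⟨i, hiA, hi⟩ := hmin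
    have hempty : corner s A = ∅ := by
      refine eq_empty_of_forall_notMem fun t ht => hi (t i) ?_
      simp only [corner, mem_filter] at ht
      exact ht.2 i hiA
    rw [hempty, sum_empty, eq_comm]
    refine hC.1 _ (hρ.cornerPoint_mem_unitInterval A s) ⟨i, ?_⟩
    simp [cornerPoint, cumulLt, hiA, hi]
  push Not at hmin
  have hpred : ∀ i, ∃ p : S i, ∀ y, y ≤ p ↔ if i ∈ A then y < s i else y ≤ s i := by
    intro i
    split_ifs with hi
    · obtain ⟨p, hp⟩ := exists_forall_lt_iff_le (hmin i hi)
      exact ⟨p, fun y => (hp y).symm⟩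
    · exact ⟨s i, fun y => Iff.rfl⟩
  -- `s'` lowers `s` to its predecessor in the coordinates of `A`
  choose s' hs' using hpred
  have hcorner : corner s A = univ.filter fun t => ∀ i, t i ≤ s' i := by
    ext t
    simp only [corner, mem_filter, mem_univ, true_and, hs']
    constructor
    · rintro ⟨hle, hlt⟩ i
      split_ifs with hi
      exacts [hlt i hi, hle i]
    · intro ht
      refine ⟨fun i => ?_, fun i hi => by simpa [hi] using ht i⟩
      have := ht i
      split_ifs at this
      exacts [this.le, this]
  have hpoint : (fun i => cumul ρ i (s' i)) = cornerPoint ρ A s := by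
    funext i
    simp only [cornerPoint, cumul, cumulLt]
    split_ifs with hi <;>
      exact sum_congr (filter_congr fun y _ => by simpa [hi] using hs' i y) fun _ _ => rfl
  rw [hcorner, ← hpoint, ← h s' (hcorner ▸ by simp)]
  rfl

theorem cdfLe_copulaDist (hρ : IsPCF ρ) (hC : IsCopula C) (s : ∀ i, S i) :
    cdfLe (copulaDist ρ C) s = C (fun i => cumul ρ i (s i)) := by
  induction s using WellFoundedLT.induction with
  | _ s ih =>
    have hproper : ∀ A ∈ ({∅}ᶜ : Finset (Finset (Fin n))),
        (-1) ^ A.card * ∑ t ∈ corner s A, copulaDist ρ C t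
          = (-1) ^ A.card * C (cornerPoint ρ A s) := by
      intro A hA
      obtain ⟨i, hi⟩ := nonempty_iff_ne_empty.2 (by simpa using hA)
      rw [sum_corner_eq_of_cdfLe_eq hρ hC fun t ht => ih t ?_]
      simp only [corner, mem_filter, mem_univ, true_and] at ht
      exact Pi.lt_def.2 ⟨ht.1, i, ht.2 i hi⟩
    have key := sum_neg_one_pow_mul_sum_corner (copulaDist ρ C) s
    conv_rhs at key => rw [copulaDist]
    rw [Fintype.sum_eq_add_sum_compl ∅, Fintype.sum_eq_add_sum_compl ∅, sum_congr rfl hproper]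
      at key
    have hcorner_empty : corner s ∅ = univ.filter fun t => ∀ i, t i ≤ s i := by
      ext; simp [corner]
    have hpoint_empty : cornerPoint ρ ∅ s = fun i => cumul ρ i (s i) := by
      funext i; simp [cornerPoint]
    simpa [hcorner_empty, hpoint_empty, cdfLe] using key

theorem eq_copulaDist_of_cdfLe_eq (hρ : IsPCF ρ) (hC : IsCopula C) {π : (∀ i, S i) → ℝ}
    (h : ∀ s, cdfLe π s = C (fun i => cumul ρ i (s i))) : π = copulaDist ρ C := by
  funext s
  rw [← sum_neg_one_pow_mul_sum_corner π s, copulaDist]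
  exact sum_congr rfl fun A _ => by rw [sum_corner_eq_of_cdfLe_eq hρ hC fun t _ => h t]

theorem represents_of_cdfLe_eq [∀ i, Nonempty (S i)] (hρ : IsPCF ρ) (hC : IsCopula C)
    {π : (∀ i, S i) → ℝ} (h : ∀ s, cdfLe π s = C (fun i => cumul ρ i (s i))) :
    Represents π ρ := by
  choose top htop using fun i => Finite.exists_max (id : S i → S i)
  intro i
  refine congrFun (eq_of_forall_sum_filter_le_eq fun z => ?_)
  have hbelow : univ.filter (fun t : ∀ j, S j => t i ∈ univ.filter (· ≤ z))
      = univ.filter fun t => ∀ j, t j ≤ Function.update top i z j := by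
    ext t
    simp only [mem_filter, mem_univ, true_and]
    refine ⟨fun ht j => ?_, fun ht => by simpa using ht i⟩
    rcases eq_or_ne j i with rfl | hji
    · simpa using ht
    · simpa [hji] using htop j (t j)
  rw [sum_fiberwise_eq_sum_filter, hbelow, ← cdfLe, h]
  refine (hC.2.1 _ (fun j => sum_filter_mem_unitInterval (hρ.1 j) (hρ.2 j) _) i
    fun j hji => ?_).trans ?_
  · rw [Function.update_of_ne hji]
    exact hρ.cumul_eq_one (htop j)
  · simp

theorem Represents.sum_eq_one (hn : 0 < n) (hρ : IsPCF ρ) {π : (∀ i, S i) → ℝ}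
    (h : Represents π ρ) : ∑ s, π s = 1 := by
  rw [← sum_fiberwise univ (fun s => s ⟨0, hn⟩) π, ← hρ.2 ⟨0, hn⟩]
  exact sum_congr rfl fun x _ => h _ x

end Copula

/-- every copula is an identification method: applying `C` to the marginal
cumulative choice functions of a pcf `ρ` determines a unique probability distribution over
choice types, and this distribution represents `ρ`. -/
theorem copula_identification_method (hn : 0 < n) [∀ i, Nonempty (S i)]
    (ρ : ∀ i, S i → ℝ) (hρ : IsPCF ρ)
    (C : (Fin n → ℝ) → ℝ) (hC : IsCopula C) :
    (∃! π : (∀ i, S i) → ℝ, IsDist π ∧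
        ∀ s : ∀ i, S i, cdfLe π s = C (fun i => cumul ρ i (s i))) ∧
    ∀ π : (∀ i, S i) → ℝ, IsDist π →
      (∀ s : ∀ i, S i, cdfLe π s = C (fun i => cumul ρ i (s i))) →
      Represents π ρ := by
  have hcdf := cdfLe_copulaDist hρ hC
  refine ⟨⟨copulaDist ρ C, ⟨⟨copulaDist_nonneg hρ hC, ?_⟩, hcdf⟩, ?_⟩, ?_⟩
  · exact (represents_of_cdfLe_eq hρ hC hcdf).sum_eq_one hn hρ
  · exact fun π hπ => eq_copulaDist_of_cdfLe_eq hρ hC hπ.2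
  · exact fun π _ h => represents_of_cdfLe_eq hρ hC h
end
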